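/- Suppose 1/2 < q_B < q_A < 1 and w ∈ [0,1). Then the equilibrium vote probabilities converge to their limit at rate 1/N: there exists a constant C > 0 such that for all N ≥ N*(w), |q_A·σ*_N(w) − q_A/(1 + q_A − q_B)| ≤ C/N, and equivalently |σ*_N(w) − 1/(1 + q_A − q_B)| ≤ C/N. -/

import Mathlib

/-!
With `b = 1 − q_B` and `t = ψ(w)^{1/N}`, `σ*_N(w) = (q_A − t b)/(q_A² − t b²)` and the limit is the
value at `t = 1`. The difference is exactly `q_A b (1 − t)/((q_A² − t b²)(q_A + b))`, whose
denominator stays above `(q_A² − b²)(q_A + b) > 0` because `t ≤ 1`, while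
`1 − ψ^{1/N} ≤ −log ψ / N` by `log x ≤ x − 1` applied to `x = ψ^{1/N}`.
-/

/-- `ψ(w) = (1−w)(1−q_B)/(q_A + w(1−q_B))`. -/
noncomputable def psi (qA qB w : ℝ) : ℝ := (1 - w) * (1 - qB) / (qA + w * (1 - qB))

/-- `N*(w) = ⌈ log ψ(w) / log (q_A(1−q_A)/(q_B(1−q_B))) ⌉`. -/
noncomputable def Nstar (qA qB w : ℝ) : ℤ :=
  ⌈Real.log (psi qA qB w) / Real.log (qA * (1 - qA) / (qB * (1 - qB)))⌉

/-- `σ*_N(w) = (q_A − ψ(w)^{1/N}(1−q_B)) / (q_A² − ψ(w)^{1/N}(1−q_B)²)`. -/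
noncomputable def sigmaStar (N : ℕ) (qA qB w : ℝ) : ℝ :=
  (qA - psi qA qB w ^ ((1 : ℝ) / N) * (1 - qB)) /
    (qA ^ 2 - psi qA qB w ^ ((1 : ℝ) / N) * (1 - qB) ^ 2)

open Real

theorem div_sub_one_div_add_eq (a b t : ℝ) (hden : a ^ 2 - t * b ^ 2 ≠ 0) (hab : a + b ≠ 0) :
    (a - t * b) / (a ^ 2 - t * b ^ 2) - 1 / (a + b) =
      a * b * (1 - t) / ((a ^ 2 - t * b ^ 2) * (a + b)) := by
  field_simp
  ring

theorem abs_div_sub_one_div_add_le {a b t : ℝ} (hb : 0 < b) (hba : b < a) (ht : t ≤ 1) :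
    |(a - t * b) / (a ^ 2 - t * b ^ 2) - 1 / (a + b)| ≤
      a * b / ((a ^ 2 - b ^ 2) * (a + b)) * (1 - t) := by
  have hden₀ : 0 < a ^ 2 - b ^ 2 := by nlinarith
  have hden : a ^ 2 - b ^ 2 ≤ a ^ 2 - t * b ^ 2 := by nlinarith
  have hab : 0 < a + b := by linarith
  rw [div_sub_one_div_add_eq a b t (by linarith) hab.ne', abs_of_nonneg (by
    apply div_nonneg <;> nlinarith), div_mul_eq_mul_div]
  gcongr
  exact mul_nonneg (mul_nonneg (by linarith) hb.le) (by linarith)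

theorem one_sub_rpow_le_neg_mul_log {x : ℝ} (hx : 0 < x) (y : ℝ) : 1 - x ^ y ≤ -(y * log x) := by
  have := log_le_sub_one_of_pos (rpow_pos_of_pos hx y)
  rw [log_rpow hx] at this
  linarith

section psi

variable {qA qB w : ℝ}

theorem psi_pos (hqB : qB < 1) (hw1 : w < 1) (hw0 : 0 ≤ w) (hqA : 0 < qA) : 0 < psi qA qB w := by
  unfold psi
  apply div_pos <;> nlinarith

theorem psi_lt_one (hsum : 1 - qB < qA) (hw0 : 0 ≤ w) (hqB : qB < 1) : psi qA qB w < 1 := by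
  unfold psi
  rw [div_lt_one (by nlinarith)]
  nlinarith

end psi

/-- The equilibrium vote probabilities converge to their limits at rate `1/N`: there is a
constant `C > 0` such that for all `N ≥ N*(w)`,
`|q_A σ*_N(w) − q_A/(1+q_A−q_B)| ≤ C/N` and `|σ*_N(w) − 1/(1+q_A−q_B)| ≤ C/N`. -/
theorem sigmaStar_rate_of_convergence (qA qB w : ℝ)
    (hqB : 1 / 2 < qB) (hqBA : qB < qA) (hqA : qA < 1)
    (hw0 : 0 ≤ w) (hw1 : w < 1) :
    ∃ C : ℝ, 0 < C ∧ ∀ N : ℕ, Nstar qA qB w ≤ (N : ℤ) →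
      |qA * sigmaStar N qA qB w - qA / (1 + qA - qB)| ≤ C / N ∧
      |sigmaStar N qA qB w - 1 / (1 + qA - qB)| ≤ C / N := by
  have hb : 0 < 1 - qB := by linarith
  have hba : 1 - qB < qA := by linarith
  have hψ0 : 0 < psi qA qB w := psi_pos (by linarith) hw1 hw0 (by linarith)
  have hψ1 : psi qA qB w < 1 := psi_lt_one hba hw0 (by linarith)
  set K := qA * (1 - qB) / ((qA ^ 2 - (1 - qB) ^ 2) * (qA + (1 - qB)))
  have hK : 0 < K :=
    div_pos (mul_pos (by linarith) hb) (mul_pos (by nlinarith) (by linarith))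
  refine ⟨K * -log (psi qA qB w), mul_pos hK (neg_pos.2 (log_neg hψ0 hψ1)), fun N _ => ?_⟩
  have hσ : |sigmaStar N qA qB w - 1 / (1 + qA - qB)| ≤ K * -log (psi qA qB w) / N :=
    calc |sigmaStar N qA qB w - 1 / (1 + qA - qB)|
        ≤ K * (1 - psi qA qB w ^ ((1 : ℝ) / N)) := by
          rw [show 1 + qA - qB = qA + (1 - qB) by ring]
          exact abs_div_sub_one_div_add_le hb hba (rpow_le_one hψ0.le hψ1.le (by positivity))
      _ ≤ K * -((1 : ℝ) / N * log (psi qA qB w)) := by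
          gcongr
          exact one_sub_rpow_le_neg_mul_log hψ0 _
      _ = K * -log (psi qA qB w) / N := by ring
  refine ⟨?_, hσ⟩
  rw [← mul_one_div qA, ← mul_sub, abs_mul, abs_of_pos (by linarith)]
  exact (mul_le_of_le_one_left (abs_nonneg _) hqA.le).trans hσ
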